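/- arXiv:2402.02305 — 3 statements merged into one kernel-verified Lean document; each statement's English description precedes it below -/
import Mathlib

section
/- For every integer r ≥ 3, ∑_{j=0}^{r-2} (-1)^j * C(r-1, j) * C(2r-3-2j, r-2) = 1, where C(n,k) denotes the binomial coefficient with the convention C(n,k) = 0 when n < k. -/
/-!
Put `n = r - 1` and `q = ∑_{j<n} (-1)ʲ C(n,j) (1 + X)^(2n-1-2j) X^(2j)`, whose coefficient of `Xⁿ`
is the sum in question. As `(1 + X)² - X² = 1 + 2X`, the binomial theorem gives
`(1 + X) q = (1 + 2X)ⁿ - (-X²)ⁿ`. Comparing the coefficients up to `Xⁿ` yields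
`(-1)ⁿ qₙ = ∑_{k≤n} (-1)ᵏ [Xᵏ] (1 + 2X)ⁿ`, which is the value `(1 - 2)ⁿ` of `(1 + 2X)ⁿ` at `-1`.
-/

open Finset

namespace Polynomial

variable {R : Type*} [CommRing R]

theorem neg_one_pow_mul_coeff_of_one_add_X_mul_eq {p q : R[X]} (h : (1 + X) * q = p) (n : ℕ) :
    (-1) ^ n * q.coeff n = ∑ k ∈ range (n + 1), (-1) ^ k * p.coeff k := by
  induction n with
  | zero => simp [← h]
  | succ n ih =>
    have hstep : p.coeff (n + 1) = q.coeff (n + 1) + q.coeff n := by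
      rw [← h, add_mul, one_mul, coeff_add, coeff_X_mul]
    rw [sum_range_succ, ← ih, hstep]
    ring

theorem sum_range_neg_one_pow_mul_coeff_eq_eval {p : R[X]} {n : ℕ} (hp : p.natDegree ≤ n) :
    ∑ k ∈ range (n + 1), (-1) ^ k * p.coeff k = p.eval (-1) := by
  simp_rw [eval_eq_sum_range' (Nat.lt_succ_of_le hp), mul_comm]

theorem coeff_one_add_X_pow_mul_X_pow {m i k : ℕ} (h : k ≤ m + i) :
    ((1 + X : R[X]) ^ m * X ^ i).coeff k = (m.choose (m + i - k) : R) := by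
  rw [coeff_mul_X_pow']
  split_ifs with hik
  · rw [coeff_one_add_X_pow, ← Nat.choose_symm (by omega)]
    congr 2
    omega
  · rw [Nat.choose_eq_zero_of_lt (by omega), Nat.cast_zero]

theorem one_add_X_mul_sum_range_smul (n : ℕ) :
    (1 + X : R[X]) * ∑ j ∈ range n,
        ((-1) ^ j * n.choose j : R) • ((1 + X) ^ (2 * n - 1 - 2 * j) * X ^ (2 * j)) =
      (1 + 2 * X) ^ n - (-X ^ 2) ^ n := by
  have hbinom : ((-X ^ 2 : R[X]) + (1 + X) ^ 2) ^ n =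
      ∑ j ∈ range (n + 1), (-X ^ 2) ^ j * ((1 + X) ^ 2) ^ (n - j) * (n.choose j : R[X]) :=
    add_pow _ _ _
  rw [show (-X ^ 2 : R[X]) + (1 + X) ^ 2 = 1 + 2 * X by ring, sum_range_succ] at hbinom
  rw [hbinom, Nat.sub_self, pow_zero, mul_one, Nat.choose_self, Nat.cast_one, mul_one,
    add_sub_cancel_right, mul_sum]
  refine sum_congr rfl fun j hj => ?_
  rw [← pow_mul, show 2 * (n - j) = 2 * n - 1 - 2 * j + 1 by grind, neg_pow (X ^ 2 : R[X]),
    ← pow_mul, Algebra.smul_def]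
  simp only [map_mul, map_pow, map_neg, map_one, map_natCast, algebraMap_eq]
  ring

end Polynomial

open Polynomial in
theorem sum_range_neg_one_pow_mul_choose_mul_choose {n : ℕ} (hn : 0 < n) :
    ∑ j ∈ range n,
      (-1 : ℤ) ^ j * n.choose j * (2 * n - 1 - 2 * j).choose (n - 1) = 1 := by
  set q : ℤ[X] := ∑ j ∈ range n,
    ((-1) ^ j * n.choose j : ℤ) • ((1 + X) ^ (2 * n - 1 - 2 * j) * X ^ (2 * j))
  have hq : q.coeff n = ∑ j ∈ range n,
      (-1 : ℤ) ^ j * n.choose j * (2 * n - 1 - 2 * j).choose (n - 1) := by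
    rw [finsetSum_coeff]
    refine sum_congr rfl fun j hj => ?_
    rw [coeff_smul, coeff_one_add_X_pow_mul_X_pow (by grind), smul_eq_mul]
    congr 3
    grind
  have hlow : ∀ k ∈ range (n + 1), ((-X ^ 2 : ℤ[X]) ^ n).coeff k = 0 := fun k hk => by
    rw [neg_pow, ← pow_mul, coeff_mul_X_pow', if_neg (by grind)]
  have hsum : ∑ k ∈ range (n + 1), (-1) ^ k * ((1 + 2 * X : ℤ[X]) ^ n - (-X ^ 2) ^ n).coeff k =
      (-1) ^ n := by
    simp_rw [coeff_sub, mul_sub, sum_sub_distrib]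
    rw [sum_range_neg_one_pow_mul_coeff_eq_eval (by compute_degree!), sum_eq_zero fun k hk => by
      rw [hlow k hk, mul_zero]]
    simp
  have hsign : (-1 : ℤ) ^ n * q.coeff n = (-1) ^ n * 1 :=
    (neg_one_pow_mul_coeff_of_one_add_X_mul_eq (one_add_X_mul_sum_range_smul n) n).trans
      (hsum.trans (mul_one _).symm)
  rw [← hq, ← mul_right_inj' (pow_ne_zero n (neg_ne_zero.mpr one_ne_zero)), hsign]

/-- Through `r-1` generic codimension-2 linear subspaces of `ℙ^{r-1}` passes a unique
hypersurface of degree `r-2`: the combinatorial identity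
`∑_{j=0}^{r-2} (-1)^j C(r-1,j) C(2r-3-2j, r-2) = 1` for every `r ≥ 3`.
(Here `C(n,k) = Nat.choose n k`, which vanishes when `n < k`.) -/
theorem alternating_sum_choose_eq_one (r : ℕ) (hr : 3 ≤ r) :
    ∑ j ∈ Finset.range (r - 1),
      (-1 : ℤ) ^ j * ((r - 1).choose j : ℤ) * ((2 * r - 3 - 2 * j).choose (r - 2) : ℤ) = 1 := by
  obtain ⟨n, rfl⟩ : ∃ n, r = n + 1 := ⟨r - 1, by omega⟩
  refine Eq.trans (sum_congr rfl fun j _ => ?_) (sum_range_neg_one_pow_mul_choose_mul_choose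
    (n := n) (by omega))
  rw [show 2 * (n + 1) - 3 - 2 * j = 2 * n - 1 - 2 * j by omega]
  rfl
end

section
/- For every integer r ≥ 3, ∑_{j≥0} (-1)^j * C(2r-3, j) * C(3r-6-2j, 2r-5) = 0, where C(n,k) is the binomial coefficient with C(n,k)=0 if n<k, and the sum is over all j for which the terms are nonzero. -/
/-!
Reading `C(k + m - 2j, k)` as the coefficient of `X ^ m` in `X ^ (2j) / (1 - X) ^ (k + 1)`, the sum
`∑ⱼ (-1)ʲ C(n, j) C(k + m - 2j, k)` is the coefficient of `X ^ m` in
`(1 - X²) ^ n / (1 - X) ^ (k + 1) = (1 + X) ^ n (1 - X) ^ (n - k - 1)`.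
For `n = 2r - 3`, `k = 2r - 5`, `m = r - 1` this is `(1 + X) ^ n (1 - X)`, whose coefficient
`C(n, m) - C(n, m - 1)` vanishes because `n = 2m - 1`.
-/

open Finset

namespace PowerSeries

variable {R : Type*} [CommRing R]

/-- For `i > m` both sides vanish; at `k = 0` the truncated `k + m - i` would give `C(0, 0) = 1`. -/
theorem coeff_X_pow_mul_invOneSubPow {k : ℕ} (hk : 0 < k) (i m : ℕ) :
    coeff m (X ^ i * (invOneSubPow R (k + 1)).val) = ((k + m - i).choose k : R) := by
  rw [coeff_X_pow_mul', invOneSubPow_val_succ_eq_mk_add_choose]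
  split_ifs with h
  · rw [coeff_mk, Nat.add_sub_assoc h]
  · rw [Nat.choose_eq_zero_of_lt (by omega), Nat.cast_zero]

theorem one_sub_X_sq_pow_mul_invOneSubPow {n k : ℕ} (h : k < n) :
    (1 - X ^ 2 : R⟦X⟧) ^ n * (invOneSubPow R (k + 1)).val
      = (1 + X) ^ n * (1 - X) ^ (n - (k + 1)) := by
  have hn : n = (n - (k + 1)) + (k + 1) := by omega
  rw [show (1 - X ^ 2 : R⟦X⟧) = (1 + X) * (1 - X) by ring, mul_pow, mul_assoc]
  nth_rw 2 [hn]
  rw [one_sub_pow_add_mul_invOneSubPow_val_eq_one_sub_pow]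

theorem sum_neg_one_pow_mul_choose_mul_choose_eq_coeff {n k : ℕ} (hk : 0 < k) (h : k < n)
    (m : ℕ) :
    ∑ j ∈ range (n + 1), (-1 : R) ^ j * n.choose j * (k + m - 2 * j).choose k
      = coeff m ((1 + X : R⟦X⟧) ^ n * (1 - X) ^ (n - (k + 1))) := by
  have hexpand : (1 - X ^ 2 : R⟦X⟧) ^ n
      = ∑ j ∈ range (n + 1), C ((-1 : R) ^ j * n.choose j) * X ^ (2 * j) := by
    rw [sub_eq_neg_add, add_pow]
    refine sum_congr rfl fun j _ => ?_
    rw [neg_pow, ← pow_mul, one_pow, mul_one, map_mul, map_pow, map_neg, map_one, map_natCast]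
    ring
  rw [← one_sub_X_sq_pow_mul_invOneSubPow h, hexpand, sum_mul, map_sum]
  refine sum_congr rfl fun j _ => ?_
  rw [mul_assoc (C _), coeff_C_mul, coeff_X_pow_mul_invOneSubPow hk]

theorem coeff_succ_one_add_X_pow_mul_one_sub_X (n m : ℕ) :
    coeff (m + 1) ((1 + X : R⟦X⟧) ^ n * (1 - X))
      = (n.choose (m + 1) : R) - n.choose m := by
  have hcoeff (i : ℕ) : coeff i ((1 + X : R⟦X⟧) ^ n) = n.choose i := by
    rw [show (1 + X : R⟦X⟧) ^ n = ((1 + Polynomial.X) ^ n : Polynomial R) by simp,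
      Polynomial.coeff_coe, Polynomial.coeff_one_add_X_pow]
  rw [mul_sub, mul_one, map_sub, coeff_succ_mul_X, hcoeff, hcoeff]

end PowerSeries

/-- For every `r ≥ 3`, `∑_{j=0}^{2r-3} (-1)^j C(2r-3,j) C(3r-6-2j, 2r-5) = 0`,
where `C(n,k) = Nat.choose n k` (so `C(n,k) = 0` when `n < k`); the sum over
`j ∈ range (2r-2)` includes all indices with a nonzero term. -/
theorem alternating_sum_choose_eq_zero (r : ℕ) (hr : 3 ≤ r) :
    ∑ j ∈ Finset.range (2 * r - 2),
      (-1 : ℤ) ^ j * ((2 * r - 3).choose j : ℤ) * ((3 * r - 6 - 2 * j).choose (2 * r - 5) : ℤ)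
      = 0 := by
  obtain ⟨s, rfl⟩ := Nat.exists_eq_add_of_le' hr
  have key := PowerSeries.sum_neg_one_pow_mul_choose_mul_choose_eq_coeff (R := ℤ)
    (n := 2 * (s + 1) + 1) (k := 2 * s + 1) (by omega) (by omega) (s + 1 + 1)
  rw [show 2 * (s + 1) + 1 - (2 * s + 1 + 1) = 1 by omega, pow_one,
    PowerSeries.coeff_succ_one_add_X_pow_mul_one_sub_X, Nat.choose_symm_half, sub_self] at key
  rw [← key, show 2 * (s + 3) - 2 = 2 * (s + 1) + 1 + 1 by omega]
  refine Finset.sum_congr rfl fun j _ => ?_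
  rw [show 2 * (s + 3) - 3 = 2 * (s + 1) + 1 by omega, show 2 * (s + 3) - 5 = 2 * s + 1 by omega,
    show 3 * (s + 3) - 6 - 2 * j = 2 * s + 1 + (s + 1 + 1) - 2 * j by omega]
end

section
/- Let S = k[x_1,…,x_r] with r ≥ 4 and let i ≥ 0 with 4 + i ≤ r. In the ring S[λ], the ideal J_λ = (x_1, λ(x_2 - x_3) + x_3) ∩ (x_3, …, x_{i+4}) equals the product ideal (x_1, λ(x_2 - x_3) + x_3) · (x_3, …, x_{i+4}). -/
/-!
Let `B = (x_j : P j)` and let `φ` be the substitution `x_j ↦ 0` for `P j`, a retraction of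
`S[λ]` with kernel `B` and `q ≡ φ q (mod B)`. If `p = a f + b g` lies in `B`, then
`φ a · φ f + φ b · φ g = 0`; here `φ f = x_1` and `φ g = λ x_2` form a regular sequence
(`x_1` is prime and does not divide `λ x_2`), so `(φ a, φ b) = c (φ g, -φ f)` is a Koszul
syzygy. Hence `a - c g` and `b + c f` lie in `B`, and `p = f (a - c g) + g (b + c f) ∈ (f, g) B`.
-/

open Polynomial

theorem Prime.exists_koszul_of_mul_add_mul_eq_zero {R : Type*} [CommRing R] [IsDomain R]
    {x y a b : R} (hx : Prime x) (hxy : ¬ x ∣ y) (h : a * x + b * y = 0) :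
    ∃ c, a = c * y ∧ b = -(c * x) := by
  obtain ⟨d, rfl⟩ : x ∣ b :=
    (hx.dvd_or_dvd ⟨-a, by linear_combination h⟩).resolve_right hxy
  refine ⟨-d, ?_, by ring⟩
  have : x * (a + d * y) = 0 := by linear_combination h
  linear_combination (mul_eq_zero.mp this).resolve_left hx.ne_zero

theorem Ideal.span_pair_inf_eq_mul_of_retraction {R : Type*} [CommRing R] {B : Ideal R}
    (φ : R →+* R) (hφB : ∀ q ∈ B, φ q = 0) (hsub : ∀ q, q - φ q ∈ B) {f g : R}
    (hsyz : ∀ a b, a * φ f + b * φ g = 0 → ∃ c, a = c * φ g ∧ b = -(c * φ f)) :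
    span {f, g} ⊓ B = span {f, g} * B := by
  refine le_antisymm (fun p hp => ?_) mul_le_inf
  obtain ⟨⟨a, b, rfl⟩, hpB⟩ := mem_inf.mp hp |>.imp_left mem_span_pair.mp
  obtain ⟨c, hac, hbc⟩ := hsyz (φ a) (φ b) (by simpa using hφB _ hpB)
  have haB : a - c * g ∈ B := by
    simpa [hac, mul_sub] using sub_mem (hsub a) (mul_mem_left B c (hsub g))
  have hbB : b + c * f ∈ B := by
    simpa [hbc, mul_sub] using add_mem (hsub b) (mul_mem_left B c (hsub f))
  have hsplit : a * f + b * g = f * (a - c * g) + g * (b + c * f) := by ring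
  rw [hsplit]
  exact add_mem (mul_mem_mul (subset_span (by simp)) haB)
    (mul_mem_mul (subset_span (by simp)) hbB)

section SetVarsZero

variable {k σ : Type*} [CommRing k] (P : σ → Prop) [DecidablePred P]

noncomputable def varsIdeal : Ideal (MvPolynomial σ k)[X] :=
  Ideal.span ((fun j => Polynomial.C (MvPolynomial.X j)) '' {j | P j})

noncomputable def setVarsZero : (MvPolynomial σ k)[X] →+* (MvPolynomial σ k)[X] :=
  mapRingHom (MvPolynomial.eval₂Hom MvPolynomial.C fun j => if P j then 0 else MvPolynomial.X j)

variable {P}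

theorem setVarsZero_C_X (j : σ) :
    setVarsZero P (Polynomial.C (MvPolynomial.X j) : (MvPolynomial σ k)[X]) =
      if P j then 0 else Polynomial.C (MvPolynomial.X j) := by
  split_ifs <;> simp [setVarsZero, *]

theorem setVarsZero_X : setVarsZero P (Polynomial.X : (MvPolynomial σ k)[X]) = Polynomial.X := by
  simp [setVarsZero]

theorem setVarsZero_eq_zero_of_mem {q : (MvPolynomial σ k)[X]} (hq : q ∈ varsIdeal P) :
    setVarsZero P q = 0 := by
  refine (Ideal.span_le (I := RingHom.ker (setVarsZero P)) |>.mpr ?_) hq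
  rintro _ ⟨j, hj, rfl⟩
  simp [setVarsZero_C_X, show P j from hj]

theorem sub_setVarsZero_mem (q : (MvPolynomial σ k)[X]) :
    q - setVarsZero P q ∈ varsIdeal P := by
  have h : (Ideal.Quotient.mk (varsIdeal (k := k) P)).comp (setVarsZero P) =
      Ideal.Quotient.mk _ := by
    refine Polynomial.ringHom_ext' (MvPolynomial.ringHom_ext (fun r => ?_) (fun j => ?_)) ?_
    · simp [setVarsZero]
    · by_cases hj : P j
      · have hmem : Polynomial.C (MvPolynomial.X j) ∈ varsIdeal (k := k) P :=
          Ideal.subset_span ⟨j, hj, rfl⟩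
        simpa [setVarsZero_C_X, hj, eq_comm (a := (0 : _ ⧸ _)), Ideal.Quotient.eq_zero_iff_mem]
          using hmem
      · simp [setVarsZero_C_X, hj]
    · simp [setVarsZero_X]
  exact Ideal.Quotient.eq.mp (RingHom.congr_fun h q).symm

end SetVarsZero

section Sundial

variable {k σ : Type*} [CommRing k] [IsDomain k]

theorem prime_C_X (j : σ) : Prime (Polynomial.C (MvPolynomial.X j) : (MvPolynomial σ k)[X]) :=
  Polynomial.prime_C_iff.mpr MvPolynomial.X_prime

theorem not_C_X_dvd_X_mul_C_X {i j : σ} (hij : i ≠ j) :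
    ¬ (Polynomial.C (MvPolynomial.X i) : (MvPolynomial σ k)[X]) ∣
      Polynomial.X * Polynomial.C (MvPolynomial.X j) := by
  intro hdvd
  rcases (prime_C_X i).dvd_or_dvd hdvd with h | h
  · have : MvPolynomial.X i ∣ (1 : MvPolynomial σ k) := by
      simpa using (Polynomial.C_dvd_iff_dvd_coeff _ _).mp h 1
    exact MvPolynomial.X_prime.not_isUnit (isUnit_of_dvd_one this)
  · have : (MvPolynomial.X i : MvPolynomial σ k) ∣ MvPolynomial.X j := by
      simpa using (Polynomial.C_dvd_iff_dvd_coeff _ _).mp h 0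
    exact hij (MvPolynomial.X_dvd_X.mp this)

theorem span_pair_inf_varsIdeal_eq_mul {P : σ → Prop} [DecidablePred P] {i j l : σ}
    (hi : ¬ P i) (hj : ¬ P j) (hl : P l) (hij : i ≠ j) :
    Ideal.span {Polynomial.C (MvPolynomial.X i),
        Polynomial.X * Polynomial.C (MvPolynomial.X j - MvPolynomial.X l) +
          Polynomial.C (MvPolynomial.X l)} ⊓ varsIdeal (k := k) P =
    Ideal.span {Polynomial.C (MvPolynomial.X i),
        Polynomial.X * Polynomial.C (MvPolynomial.X j - MvPolynomial.X l) +
          Polynomial.C (MvPolynomial.X l)} * varsIdeal P := by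
  refine Ideal.span_pair_inf_eq_mul_of_retraction (setVarsZero P)
    (fun _ => setVarsZero_eq_zero_of_mem) sub_setVarsZero_mem fun a b hab => ?_
  have hf : setVarsZero P (Polynomial.C (MvPolynomial.X i : MvPolynomial σ k)) =
      Polynomial.C (MvPolynomial.X i) := by
    simp [setVarsZero_C_X, hi]
  have hg : setVarsZero P (Polynomial.X * Polynomial.C (MvPolynomial.X j - MvPolynomial.X l) +
      Polynomial.C (MvPolynomial.X l : MvPolynomial σ k)) =
      Polynomial.X * Polynomial.C (MvPolynomial.X j) := by
    simp [Polynomial.C_sub, setVarsZero_C_X, setVarsZero_X, hj, hl]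
  rw [hf, hg] at hab ⊢
  exact (prime_C_X i).exists_koszul_of_mul_add_mul_eq_zero (not_C_X_dvd_X_mul_C_X hij) hab

end Sundial

/-- In `S[λ] = k[x_1,…,x_r][λ]` (with `x_j` realized as `MvPolynomial.X (j-1)` and `λ` as
the polynomial variable), for `r ≥ 4` and `4 + i ≤ r` the ideal
`(x_1, λ(x_2 - x_3) + x_3) ∩ (x_3, …, x_{i+4})` equals the product
`(x_1, λ(x_2 - x_3) + x_3) · (x_3, …, x_{i+4})`. -/
theorem intersection_eq_product_sundial_family (k : Type*) [Field k] (r i : ℕ)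
    (hi : 4 + i ≤ r) :
    (Ideal.span {Polynomial.C (MvPolynomial.X (⟨0, by omega⟩ : Fin r) : MvPolynomial (Fin r) k),
        Polynomial.X * Polynomial.C (MvPolynomial.X ⟨1, by omega⟩ - MvPolynomial.X ⟨2, by omega⟩) +
          Polynomial.C (MvPolynomial.X ⟨2, by omega⟩)} ⊓
      Ideal.span ((fun j => Polynomial.C (MvPolynomial.X j :
          MvPolynomial (Fin r) k)) '' {j : Fin r | 2 ≤ (j : ℕ) ∧ (j : ℕ) ≤ i + 3})) =
    Ideal.span {Polynomial.C (MvPolynomial.X (⟨0, by omega⟩ : Fin r) : MvPolynomial (Fin r) k),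
        Polynomial.X * Polynomial.C (MvPolynomial.X ⟨1, by omega⟩ - MvPolynomial.X ⟨2, by omega⟩) +
          Polynomial.C (MvPolynomial.X ⟨2, by omega⟩)} *
      Ideal.span ((fun j => Polynomial.C (MvPolynomial.X j :
          MvPolynomial (Fin r) k)) '' {j : Fin r | 2 ≤ (j : ℕ) ∧ (j : ℕ) ≤ i + 3}) :=
  span_pair_inf_varsIdeal_eq_mul (P := fun j : Fin r => 2 ≤ (j : ℕ) ∧ (j : ℕ) ≤ i + 3)
    (by simp) (by simp) (by simp) (by simp)
end
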